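/- Let H be a Hermitian operator on a finite-dimensional complex inner product space, let a < c be real numbers, and suppose every eigenvalue of H is either at most a or at least c. Let P be the orthogonal projection onto the span of the eigenvectors of H with eigenvalue at most a. Then for every linear operator B on the same space and every real τ ≥ 0, ‖(1 − P) exp(−τH) B exp(τH) P‖ ≤ ‖B‖ · exp(−τ(c − a)). -/

import Mathlib

open NormedSpace

/-- The orthogonal projection onto a subspace, as a continuous operator on the whole space. -/
noncomputable def projCLM {E : Type*} [NormedAddCommGroup E] [InnerProductSpace ℂ E]
    (K : Submodule ℂ E) [K.HasOrthogonalProjection] : E →L[ℂ] E :=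
  K.subtypeL ∘L K.orthogonalProjectionOnto

/-- The span of all eigenvectors of `H` with (real) eigenvalue at most `a`. -/
noncomputable def lowEigenSpan {E : Type*} [NormedAddCommGroup E] [InnerProductSpace ℂ E]
    (H : E →L[ℂ] E) (a : ℝ) : Submodule ℂ E :=
  ⨆ (μ : ℝ) (_ : μ ≤ a), Module.End.eigenspace (H : E →ₗ[ℂ] E) (μ : ℂ)

section Aux

variable {E : Type*} [NormedAddCommGroup E] [InnerProductSpace ℂ E] [FiniteDimensional ℂ E]


lemma exp_apply_eig (A : E →L[ℂ] E) (x : E) (μ : ℂ) (hx : A x = μ • x) :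
    exp A x = Complex.exp μ • x := by
  have hpow : ∀ n : ℕ, (A ^ n) x = μ ^ n • x := by
    intro n; induction n with
    | zero => simp
    | succ n ih =>
      rw [pow_succ, ContinuousLinearMap.mul_apply, hx, map_smul, ih, smul_smul, pow_succ]
      ring_nf
  have h1 : exp A x = ∑' n : ℕ, (((n.factorial : ℂ))⁻¹ • A ^ n) x := by
    rw [exp_eq_tsum ℂ]
    exact (ContinuousLinearMap.apply ℂ E x).map_tsum (expSeries_summable' (𝕂 := ℂ) A)
  rw [h1]
  have h2 : ∀ n : ℕ, (((n.factorial : ℂ))⁻¹ • A ^ n) x = (((n.factorial : ℂ))⁻¹ * μ ^ n) • x := by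
    intro n
    rw [ContinuousLinearMap.smul_apply, hpow, smul_smul]
  simp_rw [h2]
  rw [Summable.tsum_smul_const]
  · congr 1
    rw [Complex.exp_eq_exp_ℂ, exp_eq_tsum ℂ]
    simp_rw [smul_eq_mul]
  · simpa [smul_eq_mul] using expSeries_summable' (𝕂 := ℂ) (𝔸 := ℂ) μ

lemma exp_smul_eq_sum {n : ℕ} (H : E →L[ℂ] E) (b : OrthonormalBasis (Fin n) ℂ E)
    (μ : Fin n → ℝ) (hb : ∀ i, H (b i) = (μ i : ℂ) • b i) (t : ℝ) (y : E) :
    exp ((t : ℂ) • H) y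
      = ∑ i, (Complex.exp ((t : ℂ) * (μ i : ℂ)) * b.repr y i) • b i := by
  conv_lhs => rw [← b.sum_repr y, map_sum]
  refine Finset.sum_congr rfl fun i _ => ?_
  rw [map_smul, exp_apply_eig ((t : ℂ) • H) (b i) ((t : ℂ) * (μ i : ℂ))
      (by rw [ContinuousLinearMap.smul_apply, hb i, smul_smul]), smul_smul, mul_comm]

lemma exp_smul_norm_bound {n : ℕ} (H : E →L[ℂ] E) (b : OrthonormalBasis (Fin n) ℂ E)
    (μ : Fin n → ℝ) (hb : ∀ i, H (b i) = (μ i : ℂ) • b i) (t M : ℝ) (hM : 0 ≤ M) (y : E)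
    (hy : ∀ i, Real.exp (t * μ i) ≤ M ∨ b.repr y i = 0) :
    ‖exp ((t : ℂ) • H) y‖ ≤ M * ‖y‖ := by
  classical
  have hrepr : ∀ i, b.repr (exp ((t : ℂ) • H) y) i
      = Complex.exp ((t : ℂ) * (μ i : ℂ)) * b.repr y i := by
    intro i
    rw [exp_smul_eq_sum H b μ hb t y, map_sum, WithLp.ofLp_sum, Finset.sum_apply]
    simp [b.repr_self, EuclideanSpace.single_apply]
  have h1 : ‖exp ((t : ℂ) • H) y‖ = ‖b.repr (exp ((t : ℂ) • H) y)‖ :=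
    (b.repr.norm_map _).symm
  have h2 : ‖y‖ = ‖b.repr y‖ := (b.repr.norm_map _).symm
  rw [h1, h2, EuclideanSpace.norm_eq, EuclideanSpace.norm_eq]
  have hterm : ∀ i, ‖b.repr (exp ((t : ℂ) • H) y) i‖ ^ 2 ≤ M ^ 2 * ‖b.repr y i‖ ^ 2 := by
    intro i
    rw [hrepr i]
    rcases hy i with h | h
    · have habs : ‖Complex.exp ((t : ℂ) * (μ i : ℂ))‖ = Real.exp (t * μ i) := by
        have : (t : ℂ) * (μ i : ℂ) = ((t * μ i : ℝ) : ℂ) := by push_cast; ring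
        rw [this, Complex.norm_exp_ofReal]
      rw [norm_mul, habs, mul_pow]
      have h0 : (0:ℝ) ≤ Real.exp (t * μ i) := (Real.exp_pos _).le
      exact mul_le_mul_of_nonneg_right (pow_le_pow_left₀ h0 h 2) (sq_nonneg _)
    · rw [h, mul_zero, norm_zero]
      simp
  calc Real.sqrt (∑ i, ‖b.repr (exp ((t : ℂ) • H) y) i‖ ^ 2)
      ≤ Real.sqrt (M ^ 2 * ∑ i, ‖b.repr y i‖ ^ 2) := by
        apply Real.sqrt_le_sqrt
        rw [Finset.mul_sum]
        exact Finset.sum_le_sum fun i _ => hterm i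
    _ = M * Real.sqrt (∑ i, ‖b.repr y i‖ ^ 2) := by
        rw [Real.sqrt_mul (sq_nonneg M), Real.sqrt_sq hM]


lemma projCLM_norm_apply_le (K : Submodule ℂ E) (x : E) : ‖projCLM K x‖ ≤ ‖x‖ := by
  have h1 : ‖projCLM K x‖ = ‖K.orthogonalProjectionOnto x‖ := rfl
  rw [h1]
  calc ‖K.orthogonalProjectionOnto x‖ ≤ ‖K.orthogonalProjectionOnto‖ * ‖x‖ :=
        (K.orthogonalProjectionOnto).le_opNorm x
    _ ≤ 1 * ‖x‖ := mul_le_mul_of_nonneg_right (Submodule.orthogonalProjectionOnto_norm_le K) (norm_nonneg x)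
    _ = ‖x‖ := one_mul _

lemma one_sub_projCLM_apply (K : Submodule ℂ E) (x : E) :
    (1 - projCLM K) x = x - (K.orthogonalProjectionOnto x : E) := by
  simp [projCLM, ContinuousLinearMap.sub_apply]

lemma one_sub_projCLM_mem (K : Submodule ℂ E) (x : E) : (1 - projCLM K) x ∈ Kᗮ := by
  rw [one_sub_projCLM_apply]
  exact Submodule.sub_starProjection_mem_orthogonal (K := K) x

lemma one_sub_projCLM_norm_le (K : Submodule ℂ E) (x : E) : ‖(1 - projCLM K) x‖ ≤ ‖x‖ := by
  rw [one_sub_projCLM_apply, ← Submodule.starProjection_apply, ← Submodule.starProjection_orthogonal_val]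
  exact projCLM_norm_apply_le Kᗮ x

lemma one_sub_projCLM_eq_zero (K : Submodule ℂ E) {x : E} (hx : x ∈ K) :
    (1 - projCLM K) x = 0 := by
  rw [one_sub_projCLM_apply, ← Submodule.starProjection_apply, Submodule.starProjection_eq_self_iff.mpr hx, sub_self]

end Aux

/-- If every eigenvalue of the Hermitian operator `H` is at most `a` or at
least `c > a`, and `P` projects onto the span of the eigenvectors with eigenvalue at most `a`,
then `‖(1−P) e^{−τH} B e^{τH} P‖ ≤ ‖B‖ e^{−τ(c−a)}` for all `τ ≥ 0` and all operators `B`. -/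
theorem offdiagonal_exp_decay
    {E : Type*} [NormedAddCommGroup E] [InnerProductSpace ℂ E] [FiniteDimensional ℂ E]
    (H : E →L[ℂ] E) (hH : IsSelfAdjoint H)
    (a c : ℝ) (hac : a < c)
    (hspec : ∀ μ : ℝ, Module.End.HasEigenvalue (H : E →ₗ[ℂ] E) (μ : ℂ) → μ ≤ a ∨ c ≤ μ)
    (B : E →L[ℂ] E) (τ : ℝ) (hτ : 0 ≤ τ) :
    ‖(1 - projCLM (lowEigenSpan H a)) * exp ((-τ : ℂ) • H) * B * exp ((τ : ℂ) • H)
        * projCLM (lowEigenSpan H a)‖ ≤ ‖B‖ * Real.exp (-(τ * (c - a))) := by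
  classical
  set K : Submodule ℂ E := lowEigenSpan H a with hK
  have hsym : (H : E →ₗ[ℂ] E).IsSymmetric := hH.isSymmetric
  have hn : Module.finrank ℂ E = Module.finrank ℂ E := rfl
  set b := hsym.eigenvectorBasis hn with hbdef
  set μ := hsym.eigenvalues hn with hμdef
  have hb : ∀ i, H (b i) = (μ i : ℂ) • b i := fun i => hsym.apply_eigenvectorBasis hn i
  have hmemeig : ∀ i, b i ∈ Module.End.eigenspace (H : E →ₗ[ℂ] E) ((μ i : ℂ)) := fun i =>
    Module.End.mem_eigenspace_iff.mpr (hb i)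
  have hlow : ∀ i, μ i ≤ a → b i ∈ K := by
    intro i hi
    exact le_iSup₂ (f := fun (ν : ℝ) (_ : ν ≤ a) =>
      Module.End.eigenspace (H : E →ₗ[ℂ] E) (ν : ℂ)) (μ i) hi (hmemeig i)
  have hhigh : ∀ i, a < μ i → b i ∈ Kᗮ := by
    intro i hi
    have h1 : K ≤ (Module.End.eigenspace (H : E →ₗ[ℂ] E) ((μ i : ℂ)))ᗮ := by
      rw [hK, lowEigenSpan]
      refine iSup₂_le fun ν hν => ?_
      intro x hx
      rw [Submodule.mem_orthogonal]
      intro u hu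
      have hne : (μ i : ℂ) ≠ (ν : ℂ) := by
        exact_mod_cast ne_of_gt (lt_of_le_of_lt hν hi)
      exact hsym.orthogonalFamily_eigenspaces hne ⟨u, hu⟩ ⟨x, hx⟩
    exact (Submodule.orthogonal_le h1) (Submodule.le_orthogonal_orthogonal _ (hmemeig i))
  have hspec' : ∀ i, μ i ≤ a ∨ c ≤ μ i := fun i =>
    hspec (μ i) (hsym.hasEigenvalue_eigenvalues hn i)
  -- exp maps K to K
  have hexpK : ∀ (t : ℝ) (z : E), z ∈ K → exp ((t : ℂ) • H) z ∈ K := by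
    intro t z hz
    rw [exp_smul_eq_sum H b μ hb t z]
    refine K.sum_mem fun i _ => ?_
    by_cases hi : μ i ≤ a
    · exact K.smul_mem _ (hlow i hi)
    · have h0 : b.repr z i = 0 := by
        rw [b.repr_apply_apply]
        exact Submodule.inner_left_of_mem_orthogonal hz (hhigh i (lt_of_not_ge hi))
      rw [h0, mul_zero, zero_smul]
      exact K.zero_mem
  -- bound on exp(τ H) * P
  have hYP : ‖exp ((τ : ℂ) • H) * projCLM K‖ ≤ Real.exp (τ * a) := by
    refine ContinuousLinearMap.opNorm_le_bound _ (Real.exp_pos _).le fun x => ?_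
    rw [ContinuousLinearMap.mul_apply]
    calc ‖exp ((τ : ℂ) • H) (projCLM K x)‖
        ≤ Real.exp (τ * a) * ‖projCLM K x‖ := by
          refine exp_smul_norm_bound H b μ hb τ _ (Real.exp_pos _).le _ fun i => ?_
          by_cases hi : μ i ≤ a
          · exact Or.inl (Real.exp_le_exp.mpr (mul_le_mul_of_nonneg_left hi hτ))
          · refine Or.inr ?_
            rw [b.repr_apply_apply]
            exact Submodule.inner_left_of_mem_orthogonal
              ((K.orthogonalProjectionOnto x).2) (hhigh i (lt_of_not_ge hi))
      _ ≤ Real.exp (τ * a) * ‖x‖ :=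
          mul_le_mul_of_nonneg_left (projCLM_norm_apply_le K x) (Real.exp_pos _).le
  -- bound on (1-P) * exp(-τ H)
  have h1PX : ‖(1 - projCLM K) * exp ((-τ : ℂ) • H)‖ ≤ Real.exp (-(τ * c)) := by
    refine ContinuousLinearMap.opNorm_le_bound _ (Real.exp_pos _).le fun x => ?_
    rw [ContinuousLinearMap.mul_apply]
    have hcast : ((-τ : ℝ) : ℂ) = (-τ : ℂ) := by push_cast; ring
    set w : E := (1 - projCLM K) x with hw
    have hwmem : w ∈ Kᗮ := one_sub_projCLM_mem K x
    have hsplit : x = projCLM K x + w := by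
      rw [hw, ContinuousLinearMap.sub_apply, ContinuousLinearMap.one_apply]
      abel
    have hz : exp ((-τ : ℂ) • H) x
        = exp ((-τ : ℂ) • H) (projCLM K x) + exp ((-τ : ℂ) • H) w := by
      conv_lhs => rw [hsplit]
      exact map_add _ _ _
    have hmemK : exp ((-τ : ℂ) • H) (projCLM K x) ∈ K := by
      rw [← hcast]
      exact hexpK (-τ) _ (K.orthogonalProjectionOnto x).2
    rw [hz, map_add, one_sub_projCLM_eq_zero K hmemK, zero_add]
    calc ‖(1 - projCLM K) (exp ((-τ : ℂ) • H) w)‖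
        ≤ ‖exp ((-τ : ℂ) • H) w‖ := one_sub_projCLM_norm_le K _
      _ ≤ Real.exp (-(τ * c)) * ‖w‖ := by
          rw [← hcast]
          refine exp_smul_norm_bound H b μ hb (-τ) _ (Real.exp_pos _).le _ fun i => ?_
          rcases hspec' i with hi | hi
          · refine Or.inr ?_
            rw [b.repr_apply_apply]
            exact Submodule.inner_right_of_mem_orthogonal (hlow i hi) hwmem
          · refine Or.inl (Real.exp_le_exp.mpr ?_)
            have := mul_le_mul_of_nonneg_left hi hτ
            nlinarith
      _ ≤ Real.exp (-(τ * c)) * ‖x‖ :=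
          mul_le_mul_of_nonneg_left (one_sub_projCLM_norm_le K x) (Real.exp_pos _).le
  have hassoc : (1 - projCLM K) * exp ((-τ : ℂ) • H) * B * exp ((τ : ℂ) • H) * projCLM K
      = ((1 - projCLM K) * exp ((-τ : ℂ) • H)) * B * (exp ((τ : ℂ) • H) * projCLM K) := by
    rw [mul_assoc]
  rw [hassoc]
  calc ‖((1 - projCLM K) * exp ((-τ : ℂ) • H)) * B * (exp ((τ : ℂ) • H) * projCLM K)‖
      ≤ ‖((1 - projCLM K) * exp ((-τ : ℂ) • H)) * B‖ * ‖exp ((τ : ℂ) • H) * projCLM K‖ :=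
        norm_mul_le _ _
    _ ≤ ‖(1 - projCLM K) * exp ((-τ : ℂ) • H)‖ * ‖B‖ * ‖exp ((τ : ℂ) • H) * projCLM K‖ :=
        mul_le_mul_of_nonneg_right (norm_mul_le _ _) (norm_nonneg _)
    _ ≤ Real.exp (-(τ * c)) * ‖B‖ * Real.exp (τ * a) := by
        gcongr
    _ = ‖B‖ * Real.exp (-(τ * (c - a))) := by
        rw [show -(τ * (c - a)) = -(τ * c) + τ * a by ring, Real.exp_add]
        ring
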